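/- arXiv:1902.09989 — 2 statements merged into one kernel-verified Lean document; each statement's English description precedes it below -/
import Mathlib

section
/- Let 𝒯ₙ ⊆ Mₙ(ℂ) denote the set of upper triangular n×n complex matrices that are constant on the main diagonal. Then (a) 𝒯ₙ is a hereditarily antisymmetric operator algebra, and (b) every operator algebra in Mₙ(ℂ) that properly contains 𝒯ₙ is not antisymmetric. In particular, 𝒯ₙ is a maximal hereditarily antisymmetric operator algebra. -/
open Matrix ContinuousLinearMap

noncomputable section

abbrev Mat (n : ℕ) := Matrix (Fin n) (Fin n) ℂ
abbrev Euc (n : ℕ) := EuclideanSpace ℂ (Fin n)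

/-- An operator algebra: a complex linear subspace of matrices closed under multiplication. -/
def IsOpAlg {n : ℕ} (S : Set (Mat n)) : Prop :=
  0 ∈ S ∧ (∀ A ∈ S, ∀ B ∈ S, A + B ∈ S) ∧ (∀ (c : ℂ), ∀ A ∈ S, c • A ∈ S) ∧
    (∀ A ∈ S, ∀ B ∈ S, A * B ∈ S)

/-- Antisymmetry: `𝒜 ∩ 𝒜* ⊆ ℂ·I`. -/
def Antisym {n : ℕ} (S : Set (Mat n)) : Prop :=
  ∀ A ∈ S, Aᴴ ∈ S → ∃ c : ℂ, A = c • (1 : Mat n)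

/-- The operator on Euclidean space corresponding to a matrix. -/
def opOf {n : ℕ} (A : Mat n) : Euc n →L[ℂ] Euc n := Matrix.toEuclideanCLM (𝕜 := ℂ) A

/-- Orthogonal projection onto `E` as an endomorphism of `ℂⁿ`. -/
def oproj {n : ℕ} (E : Submodule ℂ (Euc n)) : Euc n →L[ℂ] Euc n :=
  E.subtypeL ∘L E.orthogonalProjection

def InvariantSub {n : ℕ} (S : Set (Mat n)) (E : Submodule ℂ (Euc n)) : Prop :=
  ∀ A ∈ S, ∀ x ∈ E, opOf A x ∈ E

def SemiInvariantSub {n : ℕ} (S : Set (Mat n)) (E : Submodule ℂ (Euc n)) : Prop :=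
  ∃ E₁ E₂ : Submodule ℂ (Euc n), InvariantSub S E₁ ∧ InvariantSub S E₂ ∧ E₂ ≤ E₁ ∧ E = E₁ ⊓ E₂ᗮ

/-- The compression `PAP` of a matrix to a subspace. -/
def compr {n : ℕ} (E : Submodule ℂ (Euc n)) (A : Mat n) : Euc n →L[ℂ] Euc n :=
  oproj E ∘L opOf A ∘L oproj E

/-- Hereditary antisymmetry: the compression to every semi-invariant subspace is antisymmetric. -/
def HerAntisym {n : ℕ} (S : Set (Mat n)) : Prop :=
  ∀ E : Submodule ℂ (Euc n), SemiInvariantSub S E →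
    ∀ A ∈ S, ∀ B ∈ S, compr E A = ContinuousLinearMap.adjoint (compr E B) →
      ∃ c : ℂ, compr E A = c • oproj E

/-- `𝒯ₙ`: the upper triangular matrices with constant main diagonal. -/
def Tn (n : ℕ) : Set (Mat n) :=
  {A | (∀ i j : Fin n, j < i → A i j = 0) ∧ ∀ i j : Fin n, A i i = A j j}

/-!
Every `Tn`-invariant subspace is spanned by standard basis vectors: the matrix units `E_ab`
(`a < b`) in `Tn` move a nonzero `b`-th coordinate of a vector of the subspace onto `e_a`, and
the last nonzero coordinate is what remains after subtracting the others. Hence every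
semi-invariant subspace is a coordinate subspace, its projection is a diagonal `0/1` matrix `P`,
and `PAP = PB*P` with `A, B ∈ Tn` equates an upper and a lower triangular matrix, so both are
diagonal, with the constant diagonal of `A` on the support of `P`.

An algebra `S ⊋ Tn` contains a non-scalar diagonal matrix: the diagonal part of an upper
triangular element of `S ∖ Tn`, or, if `B ∈ S` has a nonzero entry `B i j` with `j < i`, `j`
leftmost in row `i`, the lower part `B i j • E_jj` of `E_ji B`. Since the adjoint of a diagonal
matrix is a polynomial in it (Lagrange interpolation), `S` is not antisymmetric.
-/

section CoordSubspace

variable (𝕜 : Type*) [RCLike 𝕜] {ι : Type*}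

def coordSubspace (s : Set ι) : Submodule 𝕜 (EuclideanSpace 𝕜 ι) where
  carrier := {x | ∀ i ∉ s, x i = 0}
  add_mem' hx hy i hi := by simp [hx i hi, hy i hi]
  zero_mem' _ _ := rfl
  smul_mem' c x hx i hi := by simp [hx i hi]

variable {𝕜}

theorem mem_coordSubspace {s : Set ι} {x : EuclideanSpace 𝕜 ι} :
    x ∈ coordSubspace 𝕜 s ↔ ∀ i ∉ s, x i = 0 :=
  Iff.rfl

theorem coordSubspace_inf (s t : Set ι) :
    coordSubspace 𝕜 s ⊓ coordSubspace 𝕜 t = coordSubspace 𝕜 (s ∩ t) := by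
  ext x
  simp only [Submodule.mem_inf, mem_coordSubspace, Set.mem_inter_iff, not_and_or]
  exact ⟨fun h i hi => hi.elim (h.1 i) (h.2 i), fun h => ⟨fun i hi => h i (.inl hi),
    fun i hi => h i (.inr hi)⟩⟩

variable [DecidableEq ι]

variable (𝕜) in
def coordProj (s : Set ι) : Matrix ι ι 𝕜 :=
  diagonal (s.indicator 1)

theorem coordProj_conjTranspose (s : Set ι) : (coordProj 𝕜 s)ᴴ = coordProj 𝕜 s := by
  rw [coordProj, diagonal_conjTranspose]
  congr 1
  ext i
  by_cases hi : i ∈ s <;> simp [hi]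

variable [Fintype ι]

theorem coordProj_mul_mul_coordProj_apply (s : Set ι) (A : Matrix ι ι 𝕜) (i j : ι) :
    (coordProj 𝕜 s * A * coordProj 𝕜 s) i j = s.indicator 1 i * A i j * s.indicator 1 j := by
  rw [coordProj, mul_diagonal, diagonal_mul]

theorem EuclideanSpace.sum_smul_single (x : EuclideanSpace 𝕜 ι) :
    ∑ i, x i • EuclideanSpace.single i (1 : 𝕜) = x := by
  simpa using (EuclideanSpace.basisFun ι 𝕜).sum_repr x

theorem orthogonal_coordSubspace (s : Set ι) :
    (coordSubspace 𝕜 s)ᗮ = coordSubspace 𝕜 sᶜ := by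
  ext y
  rw [Submodule.mem_orthogonal, mem_coordSubspace]
  constructor
  · intro h i hi
    have hsingle : EuclideanSpace.single i (1 : 𝕜) ∈ coordSubspace 𝕜 s := fun j hj => by
      simp [show j ≠ i by rintro rfl; exact hj (not_not.1 hi)]
    simpa [EuclideanSpace.inner_single_left] using h _ hsingle
  · intro h x hx
    rw [PiLp.inner_apply]
    refine Finset.sum_eq_zero fun i _ => ?_
    by_cases hi : i ∈ s
    · simp [h i (not_not.2 hi)]
    · simp [hx i hi]

theorem starProjection_coordSubspace (s : Set ι) :
    (coordSubspace 𝕜 s).starProjection = toEuclideanCLM (𝕜 := 𝕜) (coordProj 𝕜 s) := by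
  ext1 x
  refine Submodule.eq_starProjection_of_mem_of_inner_eq_zero ?_ fun y hy => ?_
  · intro i hi
    simp [coordProj, mulVec_diagonal, hi]
  · rw [PiLp.inner_apply]
    refine Finset.sum_eq_zero fun i _ => ?_
    by_cases hi : i ∈ s
    · simp [coordProj, mulVec_diagonal, hi]
    · simp [hy i hi]

theorem eq_coordSubspace_of_single_mem {E : Submodule 𝕜 (EuclideanSpace 𝕜 ι)}
    (hE : ∀ x ∈ E, ∀ i, x i ≠ 0 → EuclideanSpace.single i (1 : 𝕜) ∈ E) :
    E = coordSubspace 𝕜 {i | EuclideanSpace.single i (1 : 𝕜) ∈ E} := by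
  ext x
  refine ⟨fun hx i hi => not_not.1 fun hxi => hi (hE x hx i hxi), fun hx => ?_⟩
  rw [← EuclideanSpace.sum_smul_single x]
  refine E.sum_mem fun i _ => ?_
  by_cases hi : EuclideanSpace.single i (1 : 𝕜) ∈ E
  · exact E.smul_mem (x i) hi
  · simp [hx i hi]

end CoordSubspace

theorem mul_apply_self_of_isUpperTriangular {m R : Type*} [Fintype m] [LinearOrder m]
    [NonUnitalNonAssocSemiring R] {A B : Matrix m m R} (hA : A.IsUpperTriangular)
    (hB : B.IsUpperTriangular) (i : m) : (A * B) i i = A i i * B i i := by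
  rw [mul_apply]
  refine Finset.sum_eq_single i (fun k _ hk => ?_) (by simp)
  rcases hk.lt_or_gt with h | h
  · rw [hA h, zero_mul]
  · rw [hB h, mul_zero]

section Tn

variable {n : ℕ}

theorem one_mem_Tn : (1 : Mat n) ∈ Tn n :=
  ⟨fun _ _ h => one_apply_ne h.ne', fun _ _ => by simp⟩

theorem single_mem_Tn {a b : Fin n} (hab : a < b) : single a b (1 : ℂ) ∈ Tn n := by
  refine ⟨fun i j hji => single_apply_of_ne _ _ _ _ _ ?_, fun i j => ?_⟩
  · rintro ⟨rfl, rfl⟩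
    exact hab.not_gt hji
  · rw [single_apply_of_ne _ _ _ _ _ (by rintro ⟨rfl, rfl⟩; exact hab.false),
      single_apply_of_ne _ _ _ _ _ (by rintro ⟨rfl, rfl⟩; exact hab.false)]

def strictUpperPart (M : Mat n) : Mat n :=
  of fun i j => if i < j then M i j else 0

theorem strictUpperPart_mem_Tn (M : Mat n) : strictUpperPart M ∈ Tn n :=
  ⟨fun i j h => by simp [strictUpperPart, h.not_gt], fun i j => by simp [strictUpperPart]⟩

theorem exists_diag_eq_of_mem_Tn {A : Mat n} (hA : A ∈ Tn n) : ∃ c, ∀ i, A i i = c := by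
  cases n with
  | zero => exact ⟨0, fun i => i.elim0⟩
  | succ m => exact ⟨A 0 0, fun i => hA.2 i 0⟩

theorem mul_mem_Tn {A B : Mat n} (hA : A ∈ Tn n) (hB : B ∈ Tn n) : A * B ∈ Tn n := by
  have hA' : A.IsUpperTriangular := fun i j h => hA.1 i j h
  have hB' : B.IsUpperTriangular := fun i j h => hB.1 i j h
  refine ⟨fun i j h => hA'.mul hB' h, fun i j => ?_⟩
  rw [mul_apply_self_of_isUpperTriangular hA' hB', mul_apply_self_of_isUpperTriangular hA' hB',
    hA.2 i j, hB.2 i j]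

theorem isOpAlg_Tn : IsOpAlg (Tn n) := by
  refine ⟨⟨fun _ _ _ => rfl, fun _ _ => rfl⟩, ?_, ?_, fun A hA B hB => mul_mem_Tn hA hB⟩
  · rintro A ⟨hA₁, hA₂⟩ B ⟨hB₁, hB₂⟩
    exact ⟨fun i j h => by simp [hA₁ i j h, hB₁ i j h],
      fun i j => by simp [hA₂ i j, hB₂ i j]⟩
  · rintro c A ⟨hA₁, hA₂⟩
    exact ⟨fun i j h => by simp [hA₁ i j h], fun i j => by simp [hA₂ i j]⟩

end Tn

section HereditaryAntisymmetry

variable {n : ℕ}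

theorem opOf_injective : Function.Injective (opOf (n := n)) :=
  (toEuclideanCLM (𝕜 := ℂ) (n := Fin n)).injective

theorem opOf_mul (A B : Mat n) : opOf (A * B) = opOf A ∘L opOf B :=
  map_mul toEuclideanCLM A B

theorem opOf_conjTranspose (A : Mat n) : opOf Aᴴ = adjoint (opOf A) := by
  rw [opOf, ← star_eq_conjTranspose, map_star, star_eq_adjoint]
  rfl

theorem opOf_single_apply (a b : Fin n) (x : Euc n) :
    opOf (single a b (1 : ℂ)) x = x b • EuclideanSpace.single a 1 := by
  ext i
  by_cases hi : i = a <;> simp [opOf, single_mulVec, hi, mul_comm]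

theorem InvariantSub.single_mem_of_lt {E : Submodule ℂ (Euc n)} (hE : InvariantSub (Tn n) E)
    {x : Euc n} (hx : x ∈ E) {a b : Fin n} (hab : a < b) (hxb : x b ≠ 0) :
    EuclideanSpace.single a (1 : ℂ) ∈ E := by
  have := E.smul_mem (x b)⁻¹ (hE _ (single_mem_Tn hab) x hx)
  rwa [opOf_single_apply, smul_smul, inv_mul_cancel₀ hxb, one_smul] at this

theorem InvariantSub.single_mem {E : Submodule ℂ (Euc n)} (hE : InvariantSub (Tn n) E)
    {x : Euc n} (hx : x ∈ E) {i : Fin n} (hxi : x i ≠ 0) :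
    EuclideanSpace.single i (1 : ℂ) ∈ E := by
  by_cases hlast : ∃ b, i < b ∧ x b ≠ 0
  · obtain ⟨b, hib, hxb⟩ := hlast
    exact hE.single_mem_of_lt hx hib hxb
  push Not at hlast
  have hrest : ∑ j ∈ Finset.univ.erase i, x j • EuclideanSpace.single j (1 : ℂ) ∈ E :=
    E.sum_mem fun j hj => by
      rcases (Finset.ne_of_mem_erase hj).lt_or_gt with h | h
      · exact E.smul_mem _ (hE.single_mem_of_lt hx h hxi)
      · simp [hlast j h]
  have hxi_single : x i • EuclideanSpace.single i (1 : ℂ) ∈ E := by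
    have hsum := Finset.add_sum_erase Finset.univ
      (fun j => x j • EuclideanSpace.single j (1 : ℂ)) (Finset.mem_univ i)
    rw [EuclideanSpace.sum_smul_single, ← eq_sub_iff_add_eq] at hsum
    exact hsum ▸ E.sub_mem hx hrest
  simpa [smul_smul, inv_mul_cancel₀ hxi] using E.smul_mem (x i)⁻¹ hxi_single

theorem SemiInvariantSub.exists_eq_coordSubspace {E : Submodule ℂ (Euc n)}
    (hE : SemiInvariantSub (Tn n) E) : ∃ s, E = coordSubspace ℂ s := by
  obtain ⟨E₁, E₂, hE₁, hE₂, -, rfl⟩ := hE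
  rw [eq_coordSubspace_of_single_mem fun x hx i => hE₁.single_mem hx,
    eq_coordSubspace_of_single_mem fun x hx i => hE₂.single_mem hx, orthogonal_coordSubspace,
    coordSubspace_inf]
  exact ⟨_, rfl⟩

theorem oproj_coordSubspace (s : Set (Fin n)) :
    oproj (coordSubspace ℂ s) = opOf (coordProj ℂ s) :=
  starProjection_coordSubspace s

theorem oproj_top : oproj (⊤ : Submodule ℂ (Euc n)) = 1 :=
  Submodule.starProjection_top'

theorem compr_coordSubspace (s : Set (Fin n)) (A : Mat n) :
    compr (coordSubspace ℂ s) A = opOf (coordProj ℂ s * A * coordProj ℂ s) := by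
  rw [compr, oproj_coordSubspace, opOf_mul, opOf_mul]
  rfl

theorem exists_coordProj_mul_mul_eq_smul {A B : Mat n} (hA : A ∈ Tn n) (hB : B ∈ Tn n)
    (s : Set (Fin n))
    (h : coordProj ℂ s * A * coordProj ℂ s = coordProj ℂ s * Bᴴ * coordProj ℂ s) :
    ∃ c : ℂ, coordProj ℂ s * A * coordProj ℂ s = c • coordProj ℂ s := by
  obtain ⟨c, hc⟩ := exists_diag_eq_of_mem_Tn hA
  refine ⟨c, ?_⟩
  ext i j
  rw [coordProj_mul_mul_coordProj_apply, Matrix.smul_apply, coordProj, diagonal_apply]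
  rcases lt_trichotomy i j with hij | rfl | hij
  · have hentry := congrFun (congrFun h i) j
    rw [coordProj_mul_mul_coordProj_apply, coordProj_mul_mul_coordProj_apply,
      conjTranspose_apply, hB.1 j i hij] at hentry
    simp [hentry, hij.ne]
  · by_cases hi : i ∈ s <;> simp [hi, hc]
  · simp [hA.1 i j hij, hij.ne']

theorem herAntisym_Tn : HerAntisym (Tn n) := by
  intro E hE A hA B hB h
  obtain ⟨s, rfl⟩ := hE.exists_eq_coordSubspace
  rw [compr_coordSubspace, compr_coordSubspace, ← opOf_conjTranspose, conjTranspose_mul,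
    conjTranspose_mul, coordProj_conjTranspose, ← mul_assoc] at h
  obtain ⟨c, hc⟩ := exists_coordProj_mul_mul_eq_smul hA hB s (opOf_injective h)
  refine ⟨c, ?_⟩
  rw [compr_coordSubspace, hc, oproj_coordSubspace, opOf, opOf, map_smul]

theorem HerAntisym.antisym {S : Set (Mat n)} (h : HerAntisym S) : Antisym S := by
  intro A hA hAH
  have htop : SemiInvariantSub S ⊤ :=
    ⟨⊤, ⊥, fun _ _ _ _ => trivial, fun _ _ x hx => by simp_all, bot_le, by simp⟩
  have hcompr (M : Mat n) : compr ⊤ M = opOf M := by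
    rw [compr, oproj_top]
    rfl
  obtain ⟨c, hc⟩ := h ⊤ htop A hA Aᴴ hAH
    (by rw [hcompr, hcompr, ← opOf_conjTranspose, conjTranspose_conjTranspose])
  refine ⟨c, opOf_injective ?_⟩
  rw [← hcompr, hc, oproj_top, opOf, map_smul, map_one]

end HereditaryAntisymmetry

theorem exists_aeval_diagonal_eq_diagonal_comp {K ι : Type*} [Field K] [Fintype ι]
    [DecidableEq ι] (d : ι → K) (f : K → K) :
    ∃ p : Polynomial K, Polynomial.aeval (diagonal d) p = diagonal (f ∘ d) := by
  classical
  refine ⟨Lagrange.interpolate (Finset.univ.image d) id f, ?_⟩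
  rw [show diagonal d = diagonalAlgHom K d from rfl, Polynomial.aeval_algHom_apply]
  refine congrArg diagonal (funext fun i => ?_)
  rw [Function.comp_apply, Polynomial.aeval_fn_apply, Polynomial.coe_aeval_eq_eval]
  exact Lagrange.eval_interpolate_at_node f (Set.injOn_id _)
    (Finset.mem_image_of_mem d (Finset.mem_univ i))

def IsOpAlg.toSubalgebra {n : ℕ} {S : Set (Mat n)} (hS : IsOpAlg S) (h1 : (1 : Mat n) ∈ S) :
    Subalgebra ℂ (Mat n) where
  carrier := S
  mul_mem' hA hB := hS.2.2.2 _ hA _ hB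
  one_mem' := h1
  add_mem' hA hB := hS.2.1 _ hA _ hB
  zero_mem' := hS.1
  algebraMap_mem' c := by simpa [Algebra.algebraMap_eq_smul_one] using hS.2.2.1 c 1 h1

section Maximality

variable {n : ℕ}

theorem not_antisym_of_diagonal_mem (S : Subalgebra ℂ (Mat n)) {d : Fin n → ℂ}
    (hd : diagonal d ∈ S) {i j : Fin n} (hij : d i ≠ d j) : ¬ Antisym (S : Set (Mat n)) := by
  intro hS
  obtain ⟨p, hp⟩ := exists_aeval_diagonal_eq_diagonal_comp d star
  have hstar : (diagonal d)ᴴ ∈ S := by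
    rw [diagonal_conjTranspose]
    exact hp ▸ Algebra.adjoin_le (Set.singleton_subset_iff.2 hd)
      (Polynomial.aeval_mem_adjoin_singleton ℂ _)
  obtain ⟨c, hc⟩ := hS _ hd hstar
  have hdiag (k : Fin n) : d k = c := by simpa using congr_fun₂ hc k k
  exact hij ((hdiag i).trans (hdiag j).symm)

variable {S : Subalgebra ℂ (Mat n)}

theorem diagonal_diag_mem (hTS : Tn n ⊆ S) {M : Mat n} (hM : M ∈ S)
    (hup : M.IsUpperTriangular) : diagonal M.diag ∈ S := by
  convert S.sub_mem hM (hTS (strictUpperPart_mem_Tn M)) using 1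
  ext i j
  rcases lt_trichotomy i j with h | rfl | h
  · simp [strictUpperPart, h, h.ne]
  · simp [strictUpperPart]
  · simp [strictUpperPart, h.not_gt, h.ne', hup h]

theorem diagonal_single_mem (hTS : Tn n ⊆ S) {B : Mat n} (hB : B ∈ S) {i j : Fin n}
    (hji : j < i) (hleft : ∀ k < j, B i k = 0) : diagonal (Pi.single j (B i j)) ∈ S := by
  have hrow : single j i 1 * B ∈ S := S.mul_mem (hTS (single_mem_Tn hji)) hB
  convert S.sub_mem hrow (hTS (strictUpperPart_mem_Tn (single j i 1 * B))) using 1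
  ext x y
  rcases eq_or_ne x j with rfl | hx
  · rcases lt_trichotomy x y with h | rfl | h
    · simp [strictUpperPart, h, h.ne]
    · simp [strictUpperPart]
    · simp [strictUpperPart, h.not_gt, h.ne', hleft y h]
  · simp [strictUpperPart, diagonal_apply, hx]

theorem exists_nonconstant_diagonal_mem (hTS : Tn n ⊆ S) {B : Mat n} (hB : B ∈ S)
    (hBT : B ∉ Tn n) : ∃ d : Fin n → ℂ, diagonal d ∈ S ∧ ∃ i j, d i ≠ d j := by
  by_cases hup : B.IsUpperTriangular
  · refine ⟨B.diag, diagonal_diag_mem hTS hB hup, ?_⟩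
    by_contra! hconst
    exact hBT ⟨fun i j h => hup h, hconst⟩
  · obtain ⟨i, j₀, hj₀i, hBij₀⟩ : ∃ i j, j < i ∧ B i j ≠ 0 := by
      simpa [IsUpperTriangular, BlockTriangular] using hup
    obtain ⟨j, ⟨hji, hBij⟩, hmin⟩ :=
      wellFounded_lt.has_min {k | k < i ∧ B i k ≠ 0} ⟨j₀, hj₀i, hBij₀⟩
    have hleft (k : Fin n) (hk : k < j) : B i k = 0 :=
      not_not.1 fun h => hmin k ⟨hk.trans hji, h⟩ hk
    exact ⟨_, diagonal_single_mem hTS hB hji hleft, j, i, by simp [hji.ne, hBij]⟩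

theorem not_antisym_of_Tn_ssubset (hTS : Tn n ⊆ S) (hne : Tn n ≠ S) :
    ¬ Antisym (S : Set (Mat n)) := by
  obtain ⟨B, hBS, hBT⟩ := Set.exists_of_ssubset (hTS.ssubset_of_ne hne)
  obtain ⟨d, hd, i, j, hij⟩ := exists_nonconstant_diagonal_mem hTS hBS hBT
  exact not_antisym_of_diagonal_mem S hd hij

end Maximality

/-- `𝒯ₙ` is a hereditarily antisymmetric operator algebra, and every operator algebra properly
containing it fails to be antisymmetric; in particular `𝒯ₙ` is maximal hereditarily
antisymmetric. -/
theorem Tn_hereditarilyAntisym_and_maximal (n : ℕ) :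
    IsOpAlg (Tn n) ∧ HerAntisym (Tn n) ∧
      (∀ S : Set (Mat n), IsOpAlg S → Tn n ⊆ S → Tn n ≠ S → ¬ Antisym S) ∧
      (∀ S : Set (Mat n), IsOpAlg S → Tn n ⊆ S → Tn n ≠ S → ¬ HerAntisym S) := by
  have not_antisym (S : Set (Mat n)) (hS : IsOpAlg S) (hTS : Tn n ⊆ S) (hne : Tn n ≠ S) :
      ¬ Antisym S :=
    not_antisym_of_Tn_ssubset (S := hS.toSubalgebra (hTS one_mem_Tn)) hTS hne
  exact ⟨isOpAlg_Tn, herAntisym_Tn, not_antisym,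
    fun S hS hTS hne hHer => not_antisym S hS hTS hne hHer.antisym⟩
end
end

section
/- Let 𝒜 ⊆ Mₙ(ℂ) (n ≥ 1) be a nilpotent operator algebra. Then there is a natural number r such that: some quantum chain for 𝒜 has length r; every quantum chain for 𝒜 has length at most r; some ordered partition of ℂⁿ into quantum antichains for 𝒜 has size r; and every ordered partition of ℂⁿ into quantum antichains for 𝒜 has size at least r. (That is, the maximal length of a quantum chain equals the minimal size of an ordered partition into quantum antichains.) -/
open Matrix ContinuousLinearMap

noncomputable section

/-- A quantum antichain: a nonzero semi-invariant subspace whose compression of the algebra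
vanishes. -/
def QAntichain {n : ℕ} (S : Set (Mat n)) (E : Submodule ℂ (Euc n)) : Prop :=
  E ≠ ⊥ ∧ SemiInvariantSub S E ∧ ∀ A ∈ S, compr E A = 0

/-- A quantum chain of length `k`: nonzero vectors `v 0, …, v (k-1)` with each `v (i+1)` in
`𝒜 (v i)`. -/
def IsQChain {n : ℕ} (S : Set (Mat n)) (k : ℕ) (v : ℕ → Euc n) : Prop :=
  (∀ i < k, v i ≠ 0) ∧ ∀ i : ℕ, i + 1 < k → ∃ A ∈ S, v (i + 1) = opOf A (v i)

/-- An ordered partition of `ℂⁿ` into `k` quantum antichains. -/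
def OrderedQAPartition {n : ℕ} (S : Set (Mat n)) (k : ℕ)
    (E : Fin k → Submodule ℂ (Euc n)) : Prop :=
  (∀ i, QAntichain S (E i)) ∧
  (∀ i j : Fin k, i ≠ j → ∀ x ∈ E i, ∀ y ∈ E j, (inner ℂ x y : ℂ) = 0) ∧
  (⨆ i, E i) = ⊤ ∧
  (∀ i : Fin k, InvariantSub S (⨆ j ∈ Set.Iic i, E j))

/-!
Put `V₀ = 0` and `V_{d+1} = {x | A x ∈ V_d for all A ∈ 𝒜}`. This is the upper central series of
`ℂⁿ` as a module over the Lie algebra `𝒜`, so by Engel's theorem it reaches `ℂⁿ`; let `r` be the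
first index where it does. A vector outside `V_d` starts a quantum chain of length `d + 1`, while
the `i`-th vector of a chain of length `k` lies outside `V_{k-1-i}`, so `r` is the maximal length
of a chain. The layers `V_{i+1} ⊖ V_i` (`i < r`) form an ordered partition into quantum
antichains. Conversely, if `E₁ ⊕ ⋯ ⊕ E_k` is an ordered partition, then `E₁ ⊕ ⋯ ⊕ E_i ⊆ V_i` by
induction on `i`, because `𝒜` maps `E_i` into `(E₁ ⊕ ⋯ ⊕ E_i) ⊖ E_i`; hence `r ≤ k`.
-/

attribute [local instance] LieRing.ofAssociativeRing

section OrthogonalLayers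

variable {𝕜 E : Type*} [RCLike 𝕜] [NormedAddCommGroup E] [InnerProductSpace 𝕜 E]

theorem Submodule.IsOrtho.sup_inf_orthogonal_eq {D B : Submodule 𝕜 E} (h : D ⟂ B) :
    (D ⊔ B) ⊓ Bᗮ = D := by
  rw [sup_inf_assoc_of_le B h, Submodule.inf_orthogonal_eq_bot, sup_bot_eq]

theorem isOrtho_orthogonal_inf_of_lt {V : ℕ → Submodule 𝕜 E} (hV : Monotone V) {i j : ℕ}
    (hij : i < j) : ((V i)ᗮ ⊓ V (i + 1)) ⟂ ((V j)ᗮ ⊓ V (j + 1)) :=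
  (Submodule.isOrtho_orthogonal_right (V j)).mono (inf_le_right.trans (hV hij)) inf_le_left

theorem iSup_lt_orthogonal_inf_eq [FiniteDimensional 𝕜 E] {V : ℕ → Submodule 𝕜 E}
    (hV : Monotone V) (h0 : V 0 = ⊥) (m : ℕ) : ⨆ j < m, (V j)ᗮ ⊓ V (j + 1) = V m := by
  induction m with
  | zero => simp [h0]
  | succ m ih =>
    rw [Nat.iSup_lt_succ, ih,
      Submodule.sup_orthogonal_inf_of_hasOrthogonalProjection (hV m.le_succ)]

end OrthogonalLayers

theorem Fin.biSup_Iic_eq {α : Type*} [CompleteLattice α] {r : ℕ} (f : ℕ → α) (i : Fin r) :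
    ⨆ j ∈ Set.Iic i, f j = ⨆ j < (i : ℕ) + 1, f j :=
  le_antisymm (iSup₂_le fun j hj => le_iSup₂_of_le (j : ℕ) (Nat.lt_succ_of_le hj) le_rfl)
    (iSup₂_le fun j hj =>
      le_iSup₂_of_le (⟨j, by omega⟩ : Fin r) (Nat.le_of_lt_succ hj) le_rfl)

theorem Fin.biSup_lt_le_iSup {α : Type*} [CompleteLattice α] {r : ℕ} (f : ℕ → α) :
    ⨆ j < r, f j ≤ ⨆ i : Fin r, f i :=
  iSup₂_le fun j hj => le_iSup_of_le ⟨j, hj⟩ le_rfl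

section Compression

variable {n : ℕ} {E : Submodule ℂ (Euc n)}

theorem oproj_mem (x : Euc n) : oproj E x ∈ E :=
  (E.orthogonalProjectionOnto x).2

theorem oproj_eq_self {x : Euc n} (hx : x ∈ E) : oproj E x = x :=
  E.starProjection_eq_self_iff.mpr hx

theorem oproj_eq_zero_iff {x : Euc n} : oproj E x = 0 ↔ x ∈ Eᗮ := by
  rw [← Submodule.orthogonalProjectionOnto_eq_zero_iff]
  exact ZeroMemClass.coe_eq_zero

theorem compr_eq_zero_iff {A : Mat n} : compr E A = 0 ↔ ∀ x ∈ E, opOf A x ∈ Eᗮ := by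
  refine ⟨fun h x hx => oproj_eq_zero_iff.mp ?_, fun h => ?_⟩
  · simpa [compr, oproj_eq_self hx] using congr($h x)
  · exact ContinuousLinearMap.ext fun y => oproj_eq_zero_iff.mpr (h _ (oproj_mem y))

end Compression

section UpperFiltration

variable {n : ℕ} {S : Set (Mat n)}

variable (S) in
def upperFiltration : ℕ → Submodule ℂ (Euc n)
  | 0 => ⊥
  | d + 1 => ⨅ A ∈ S, (upperFiltration d).comap (opOf A : Euc n →ₗ[ℂ] Euc n)

theorem mem_upperFiltration_succ {d : ℕ} {x : Euc n} :
    x ∈ upperFiltration S (d + 1) ↔ ∀ A ∈ S, opOf A x ∈ upperFiltration S d := by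
  simp [upperFiltration, Submodule.mem_iInf]

variable (S) in
theorem upperFiltration_le_succ (d : ℕ) : upperFiltration S d ≤ upperFiltration S (d + 1) := by
  induction d with
  | zero => exact bot_le
  | succ d ih =>
    intro x hx
    exact mem_upperFiltration_succ.mpr fun A hA => ih (mem_upperFiltration_succ.mp hx A hA)

variable (S) in
theorem monotone_upperFiltration : Monotone (upperFiltration S) :=
  monotone_nat_of_le_succ (upperFiltration_le_succ S)

variable (S) in
theorem invariantSub_upperFiltration (d : ℕ) : InvariantSub S (upperFiltration S d) :=
  fun A hA _ hx => mem_upperFiltration_succ.mp (upperFiltration_le_succ S d hx) A hA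

theorem upperFiltration_eq_of_succ_eq {i j : ℕ}
    (h : upperFiltration S (i + 1) = upperFiltration S i) (hij : i ≤ j) :
    upperFiltration S j = upperFiltration S i := by
  induction j, hij using Nat.le_induction with
  | base => rfl
  | succ j _ ih =>
    change ⨅ A ∈ S, (upperFiltration S j).comap _ = _
    rw [ih]
    exact h

theorem upperFiltration_lt_succ {r i : ℕ} (hr : ∀ d, upperFiltration S d = ⊤ ↔ r ≤ d)
    (hi : i < r) : upperFiltration S i < upperFiltration S (i + 1) := by
  refine (upperFiltration_le_succ S i).lt_of_ne fun h => hi.not_ge ((hr i).mp ?_)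
  rw [← upperFiltration_eq_of_succ_eq h.symm hi.le]
  exact (hr r).mpr le_rfl

end UpperFiltration

section Engel

variable {n : ℕ} {S : Set (Mat n)}

def opAlgHom (n : ℕ) : Mat n →ₐ[ℂ] Module.End ℂ (Euc n) :=
  AlgHom.ofLinearMap
    ((ContinuousLinearMap.coeLM ℂ).comp
      (Matrix.toEuclideanCLM (𝕜 := ℂ)).toAlgEquiv.toLinearMap)
    (by ext; simp) (fun A B => by ext; simp)

def IsOpAlg.lieSubalgebra (hS : IsOpAlg S) : LieSubalgebra ℂ (Mat n) where
  carrier := S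
  add_mem' ha hb := hS.2.1 _ ha _ hb
  zero_mem' := hS.1
  smul_mem' c _ hA := hS.2.2.1 c _ hA
  lie_mem' {A B} hA hB := by
    rw [Ring.lie_def, sub_eq_add_neg, ← neg_one_smul ℂ (B * A)]
    exact hS.2.1 _ (hS.2.2.2 A hA B hB) _ (hS.2.2.1 _ _ (hS.2.2.2 B hB A hA))

theorem toSubmodule_ucs_eq_upperFiltration (hS : IsOpAlg S) (d : ℕ) :
    ((⊥ : LieSubmodule ℂ (hS.lieSubalgebra.map (opAlgHom n).toLieHom) (Euc n)).ucs d :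
      Submodule ℂ (Euc n)) = upperFiltration S d := by
  induction d with
  | zero => rfl
  | succ d ih =>
    ext x
    simp only [LieSubmodule.ucs_succ, LieSubmodule.mem_toSubmodule, LieSubmodule.mem_normalizer,
      LieSubalgebra.coe_bracket_of_module, Module.End.lie_apply, Subtype.forall,
      LieSubalgebra.mem_map, AlgHom.coe_toLieHom, forall_exists_index, and_imp,
      forall_apply_eq_imp_iff₂, mem_upperFiltration_succ, ← ih]
    exact Iff.rfl

theorem exists_forall_upperFiltration_eq_top_iff (hS : IsOpAlg S)
    (hnil : ∀ A ∈ S, IsNilpotent A) : ∃ r, ∀ d, upperFiltration S d = ⊤ ↔ r ≤ d := by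
  classical
  have hex : ∃ d, upperFiltration S d = ⊤ := by
    have hL : LieModule.IsNilpotent (hS.lieSubalgebra.map (opAlgHom n).toLieHom) (Euc n) := by
      rw [LieModule.isNilpotent_iff_forall' (R := ℂ)]
      rintro ⟨_, A, hA, rfl⟩
      exact (hnil A hA).map (opAlgHom n)
    obtain ⟨d, hd⟩ := (LieModule.isNilpotent_iff_exists_ucs_eq_top ℂ).mp hL
    refine ⟨d, ?_⟩
    rw [← toSubmodule_ucs_eq_upperFiltration hS, hd, LieSubmodule.top_toSubmodule]
  refine ⟨Nat.find hex, fun d => ⟨Nat.find_min' hex, fun h => top_unique ?_⟩⟩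
  exact (Nat.find_spec hex).ge.trans (monotone_upperFiltration S h)

end Engel

section Chains

variable {n : ℕ} {S : Set (Mat n)}

theorem IsQChain.notMem_upperFiltration {k : ℕ} {v : ℕ → Euc n} (hv : IsQChain S k v)
    {i d : ℕ} (h : i + d < k) : v i ∉ upperFiltration S d := by
  induction d generalizing i with
  | zero => exact hv.1 i (by omega)
  | succ d ih =>
    obtain ⟨A, hA, hvi⟩ := hv.2 i (by omega)
    intro hx
    exact ih (i := i + 1) (by omega) (hvi ▸ mem_upperFiltration_succ.mp hx A hA)

theorem exists_isQChain_of_notMem {d : ℕ} {x : Euc n} (hx : x ∉ upperFiltration S d) :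
    ∃ v, IsQChain S (d + 1) v ∧ v 0 = x := by
  have hx0 : x ≠ 0 := fun h => hx (h ▸ zero_mem _)
  induction d generalizing x with
  | zero => exact ⟨fun _ => x, ⟨fun _ _ => hx0, fun _ _ => by omega⟩, rfl⟩
  | succ d ih =>
    obtain ⟨A, hA, hAx⟩ : ∃ A ∈ S, opOf A x ∉ upperFiltration S d := by
      simpa [mem_upperFiltration_succ] using hx
    obtain ⟨w, ⟨hw0, hwS⟩, hw⟩ := ih hAx fun h => hAx (h ▸ zero_mem _)
    refine ⟨fun | 0 => x | i + 1 => w i, ⟨?_, ?_⟩, rfl⟩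
    · rintro (_ | i) hi
      exacts [hx0, hw0 i (by omega)]
    · rintro (_ | i) hi
      exacts [⟨A, hA, hw⟩, hwS i (by omega)]

end Chains

section Antichains

variable {n : ℕ} {S : Set (Mat n)}

theorem qAntichain_orthogonal_inf_upperFiltration {i : ℕ}
    (hi : upperFiltration S i < upperFiltration S (i + 1)) :
    QAntichain S ((upperFiltration S i)ᗮ ⊓ upperFiltration S (i + 1)) := by
  have hle := upperFiltration_le_succ S i
  refine ⟨fun hbot => hi.ne ?_, ⟨_, _, invariantSub_upperFiltration S (i + 1),
    invariantSub_upperFiltration S i, hle, inf_comm _ _⟩, fun A hA => ?_⟩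
  · simpa [hbot] using Submodule.sup_orthogonal_inf_of_hasOrthogonalProjection hle
  · refine compr_eq_zero_iff.mpr fun x hx => ?_
    exact (Submodule.isOrtho_orthogonal_right _).mono_right inf_le_left
      (mem_upperFiltration_succ.mp hx.2 A hA)

theorem exists_orderedQAPartition {r : ℕ} (hr : ∀ d, upperFiltration S d = ⊤ ↔ r ≤ d) :
    ∃ E : Fin r → Submodule ℂ (Euc n), OrderedQAPartition S r E := by
  have hsup := iSup_lt_orthogonal_inf_eq (monotone_upperFiltration S) rfl
  set V := upperFiltration S
  refine ⟨fun i => (V i)ᗮ ⊓ V (i + 1),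
    fun i => qAntichain_orthogonal_inf_upperFiltration (upperFiltration_lt_succ hr i.2),
    fun i j hij => ?_, ?_, fun i => ?_⟩
  · refine Submodule.isOrtho_iff_inner_eq.mp ?_
    rcases lt_or_gt_of_ne (Fin.val_ne_of_ne hij) with h | h
    exacts [isOrtho_orthogonal_inf_of_lt (monotone_upperFiltration S) h,
      (isOrtho_orthogonal_inf_of_lt (monotone_upperFiltration S) h).symm]
  · refine top_unique ?_
    rw [← (hr r).mpr le_rfl, ← hsup r]
    exact Fin.biSup_lt_le_iSup (fun j => (V j)ᗮ ⊓ V (j + 1))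
  · rw [Fin.biSup_Iic_eq (fun j => (V j)ᗮ ⊓ V (j + 1)) i, hsup]
    exact invariantSub_upperFiltration S _

theorem sup_le_upperFiltration_succ {D B : Submodule ℂ (Euc n)} {d : ℕ} (hDB : D ⟂ B)
    (hinv : InvariantSub S (D ⊔ B)) (hD : D ≤ upperFiltration S d)
    (hB : ∀ A ∈ S, compr B A = 0) : D ⊔ B ≤ upperFiltration S (d + 1) := by
  refine sup_le (hD.trans (upperFiltration_le_succ S d)) fun b hb =>
    mem_upperFiltration_succ.mpr fun A hA => hD ?_
  rw [← hDB.sup_inf_orthogonal_eq]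
  exact ⟨hinv A hA b (Submodule.mem_sup_right hb), compr_eq_zero_iff.mp (hB A hA) b hb⟩

theorem OrderedQAPartition.isOrtho {k : ℕ} {E : Fin k → Submodule ℂ (Euc n)}
    (hE : OrderedQAPartition S k E) {i j : Fin k} (hij : i ≠ j) : E i ⟂ E j :=
  Submodule.isOrtho_iff_inner_eq.mpr (hE.2.1 i j hij)

theorem OrderedQAPartition.biSup_Iic_le_upperFiltration {k : ℕ}
    {E : Fin k → Submodule ℂ (Euc n)} (hE : OrderedQAPartition S k E) (i : Fin k) :
    ⨆ j ∈ Set.Iic i, E j ≤ upperFiltration S (i + 1) := by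
  induction i using WellFoundedLT.induction with
  | _ i ih =>
  have hsplit : ⨆ j ∈ Set.Iic i, E j = (⨆ j ∈ Set.Iio i, E j) ⊔ E i := by
    rw [← Set.Iio_insert, iSup_insert, sup_comm]
  have hinv := hE.2.2.2 i
  rw [hsplit] at hinv ⊢
  refine sup_le_upperFiltration_succ (iSup₂_le fun j hj => hE.isOrtho hj.ne) hinv
    (iSup₂_le fun j hj => ?_) (hE.1 i).2.2
  exact (le_biSup E (Set.mem_Iic.mpr le_rfl)).trans
    ((ih j hj).trans (monotone_upperFiltration S (Nat.succ_le_of_lt hj)))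

theorem OrderedQAPartition.upperFiltration_eq_top {k : ℕ} {E : Fin k → Submodule ℂ (Euc n)}
    (hE : OrderedQAPartition S k E) : upperFiltration S k = ⊤ := by
  rw [eq_top_iff, ← hE.2.2.1]
  exact iSup_le fun i => (le_biSup E (Set.mem_Iic.mpr le_rfl)).trans
    ((hE.biSup_Iic_le_upperFiltration i).trans (monotone_upperFiltration S i.2))

end Antichains

theorem quantum_mirsky_general (n : ℕ) (S : Set (Mat n)) (hS : IsOpAlg S)
    (hnil : ∀ A ∈ S, IsNilpotent A) :
    ∃ r : ℕ,
      (∃ v : ℕ → Euc n, IsQChain S r v) ∧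
      (∀ (k : ℕ) (v : ℕ → Euc n), IsQChain S k v → k ≤ r) ∧
      (∃ E : Fin r → Submodule ℂ (Euc n), OrderedQAPartition S r E) ∧
      (∀ (k : ℕ) (E : Fin k → Submodule ℂ (Euc n)), OrderedQAPartition S k E → r ≤ k) := by
  obtain ⟨r, hr⟩ := exists_forall_upperFiltration_eq_top_iff hS hnil
  refine ⟨r, ?_, fun k v hv => ?_, exists_orderedQAPartition hr,
    fun k E hE => (hr k).mp hE.upperFiltration_eq_top⟩
  · cases r with
    | zero => exact ⟨0, by simp [IsQChain]⟩
    | succ d =>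
      obtain ⟨x, hx⟩ := SetLike.exists_not_mem_of_ne_top _ (mt (hr d).mp (by omega))
      exact (exists_isQChain_of_notMem hx).imp fun _ => And.left
  · cases k with
    | zero => exact r.zero_le
    | succ d =>
      by_contra! hlt
      have htop : upperFiltration S d = ⊤ := (hr d).mpr (by omega)
      exact hv.notMem_upperFiltration (i := 0) (by omega) (htop ▸ Submodule.mem_top)

/-- Quantum Mirsky theorem: for a nilpotent operator algebra in `Mₙ(ℂ)` (`n ≥ 1`), the maximal
length of a quantum chain equals the minimal size of an ordered partition of `ℂⁿ` into quantum
antichains. -/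
theorem quantum_mirsky (n : ℕ) (hn : 1 ≤ n) (S : Set (Mat n)) (hS : IsOpAlg S)
    (hnil : ∀ A ∈ S, IsNilpotent A) :
    ∃ r : ℕ,
      (∃ v : ℕ → Euc n, IsQChain S r v) ∧
      (∀ (k : ℕ) (v : ℕ → Euc n), IsQChain S k v → k ≤ r) ∧
      (∃ E : Fin r → Submodule ℂ (Euc n), OrderedQAPartition S r E) ∧
      (∀ (k : ℕ) (E : Fin k → Submodule ℂ (Euc n)), OrderedQAPartition S k E → r ≤ k) :=
  quantum_mirsky_general n S hS hnil
end
end
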